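/- arXiv:1610.06399 — 4 statements merged into one kernel-verified Lean document; each statement's English description precedes it below -/
import Mathlib

section
/- Subject reduction for the finite multiset intersection type system R₀: if Γ ⊢ t : τ is derivable and t β-reduces to t', then Γ ⊢ t' : τ is derivable. -/
/-- Types of system R₀: `σ ::= o | [σ_i]_{i∈I} → τ`, with the source of an
arrow represented as a list of types, understood as a multiset (the typing
rules below only ever compare such lists as multisets). -/
inductive RTy : Type
  | atom : ℕ → RTy
  | arr : List RTy → RTy → RTy

/-- Lambda terms in de Bruijn notation. -/
inductive Term : Type
  | var : ℕ → Term
  | lam : Term → Term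
  | app : Term → Term → Term

/-- Lift the free variables `≥ c` of a term by one. -/
def liftAux (c : ℕ) : Term → Term
  | .var n => if n < c then .var n else .var (n + 1)
  | .lam t => .lam (liftAux (c + 1) t)
  | .app t u => .app (liftAux c t) (liftAux c u)

/-- Capture-avoiding substitution of `s` for de Bruijn index `k`. -/
def subst (s : Term) : ℕ → Term → Term
  | k, .var n => if n < k then .var n else if n = k then (liftAux 0)^[k] s else .var (n - 1)
  | k, .lam t => .lam (subst s (k + 1) t)
  | k, .app t u => .app (subst s k t) (subst s k u)

/-- Contexts: each variable is assigned a finite multiset of types. -/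
abbrev Ctx := ℕ → Multiset RTy

/-- The empty context. -/
def emptyC : Ctx := fun _ => 0

/-- System R₀: non-idempotent (multiset) intersection typing.
(ax) `x : [τ] ⊢ x : τ`;
(abs) from `Γ; x:[σ_i] ⊢ t : τ` derive `Γ ⊢ λx.t : [σ_i] → τ`;
(app) from `Γ ⊢ t : [σ_i]_{i∈I} → τ` and `Δ_i ⊢ u : σ_i` for each `i ∈ I`,
derive `Γ + Σ_i Δ_i ⊢ t u : τ`. -/
inductive DerR : Ctx → Term → RTy → Prop
  | ax (n : ℕ) (τ : RTy) :
      DerR (Function.update emptyC n {τ}) (.var n) τ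
  | abs {Γ : Ctx} {t : Term} {τ : RTy} (L : List RTy) :
      DerR Γ t τ → (↑L : Multiset RTy) = Γ 0 →
      DerR (fun n => Γ (n + 1)) (.lam t) (.arr L τ)
  | app {Γ : Ctx} {t u : Term} {τ : RTy} {L : List RTy} (Δs : List (Ctx × RTy)) :
      DerR Γ t (.arr L τ) →
      (∀ p ∈ Δs, DerR p.1 u p.2) →
      (↑(Δs.map Prod.snd) : Multiset RTy) = ↑L →
      DerR (fun n => Γ n + ((Δs.map (fun p => p.1 n)).sum)) (.app t u) τ

/-- β-reduction, contextually closed. -/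
inductive Step : Term → Term → Prop
  | beta (r s : Term) : Step (.app (.lam r) s) (subst s 0 r)
  | lam {t t' : Term} : Step t t' → Step (.lam t) (.lam t')
  | appL {t t' u : Term} : Step t t' → Step (.app t u) (.app t' u)
  | appR {t u u' : Term} : Step u u' → Step (.app t u) (.app t u')

-- auxiliary definitions
def insertCtx (c : ℕ) (Γ : Ctx) : Ctx :=
  fun n => if n < c then Γ n else if n = c then 0 else Γ (n-1)

def shiftCtx (k : ℕ) (Δ : Ctx) : Ctx :=
  fun n => if n < k then 0 else Δ (n - k)

def substCtx (k : ℕ) (Γ : Ctx) (Δs : List (Ctx × RTy)) : Ctx :=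
  fun n => (if n < k then Γ n else Γ (n+1)) + ((Δs.map (fun p => shiftCtx k p.1 n)).sum)

lemma DerR.congr {Γ Γ' : Ctx} {t : Term} {τ : RTy} (h : DerR Γ t τ) (he : Γ = Γ') :
    DerR Γ' t τ := he ▸ h

lemma lift_lemma {Γ : Ctx} {t : Term} {τ : RTy} (hd : DerR Γ t τ) :
    ∀ c, DerR (insertCtx c Γ) (liftAux c t) τ := by
  induction hd with
  | ax n τ =>
    intro c
    by_cases h : n < c
    · have : liftAux c (Term.var n) = Term.var n := by simp [liftAux, h]
      rw [this]
      refine (DerR.ax n τ).congr ?_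
      funext m
      simp only [insertCtx, Function.update_apply, emptyC]
      split_ifs <;> first | rfl | omega
    · have : liftAux c (Term.var n) = Term.var (n+1) := by simp [liftAux, h]
      rw [this]
      refine (DerR.ax (n+1) τ).congr ?_
      funext m
      simp only [insertCtx, Function.update_apply, emptyC]
      split_ifs <;> first | rfl | omega
  | abs L hd hL ih =>
    intro c
    show DerR _ (.lam (liftAux (c+1) _)) _
    refine ((DerR.abs L (ih (c+1)) ?_)).congr ?_
    · rw [hL]; simp [insertCtx]
    · funext n
      simp only [insertCtx]
      split_ifs <;> first | rfl | omega | (congr 1; omega)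
  | app Δs hdt hdu hL iht ihu =>
    intro c
    show DerR _ (.app (liftAux c _) (liftAux c _)) _
    refine (DerR.app (Δs.map (fun p => (insertCtx c p.1, p.2))) (iht c) ?_ ?_).congr ?_
    · intro p hp
      simp only [List.mem_map] at hp
      obtain ⟨q, hq, rfl⟩ := hp
      exact ihu q hq c
    · rw [List.map_map]
      simpa [Function.comp_def] using hL
    · funext n
      rw [show (List.map (fun p => p.1 n) (List.map (fun p => (insertCtx c p.1, p.2)) Δs))
            = Δs.map (fun p => insertCtx c p.1 n) by rw [List.map_map]; rfl]
      by_cases h1 : n < c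
      · have hent : Δs.map (fun p => insertCtx c p.1 n) = Δs.map (fun p => p.1 n) :=
          List.map_congr_left fun a _ => by simp [insertCtx, h1]
        rw [hent]; simp [insertCtx, h1]
      · by_cases h2 : n = c
        · subst h2
          have hent : Δs.map (fun p => insertCtx n p.1 n) = Δs.map (fun _ => (0 : Multiset RTy)) :=
            List.map_congr_left fun a _ => by simp [insertCtx]
          rw [hent]; simp [insertCtx]
        · have hent : Δs.map (fun p => insertCtx c p.1 n) = Δs.map (fun p => p.1 (n-1)) :=
            List.map_congr_left fun a _ => by simp [insertCtx, h1, h2]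
          rw [hent]; simp [insertCtx, h1, h2]

lemma lift_iter {Δ : Ctx} {s : Term} {σ : RTy} (hd : DerR Δ s σ) :
    ∀ k, DerR (shiftCtx k Δ) ((liftAux 0)^[k] s) σ := by
  intro k
  induction k with
  | zero =>
    simpa [show shiftCtx 0 Δ = Δ from funext fun n => by simp [shiftCtx]] using hd
  | succ k ih =>
    rw [Function.iterate_succ_apply']
    refine (lift_lemma ih 0).congr ?_
    funext n
    simp only [insertCtx, shiftCtx]
    split_ifs <;> first | rfl | omega | (congr 1; omega)

lemma split2 : ∀ (Δs : List (Ctx × RTy)) (A B : Multiset RTy),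
    (↑(Δs.map Prod.snd) : Multiset RTy) = A + B →
    ∃ Δ₁ Δ₂ : List (Ctx × RTy), Δs.Perm (Δ₁ ++ Δ₂) ∧
      (↑(Δ₁.map Prod.snd) : Multiset RTy) = A ∧ (↑(Δ₂.map Prod.snd) : Multiset RTy) = B := by
  intro Δs
  induction Δs with
  | nil =>
    intro A B h
    simp only [List.map_nil, Multiset.coe_nil] at h
    have hA : A = 0 := Multiset.le_zero.mp (h ▸ self_le_add_right A B)
    have hB : B = 0 := Multiset.le_zero.mp (h ▸ self_le_add_left B A)
    exact ⟨[], [], by simp, by simp [hA], by simp [hB]⟩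
  | cons p Δs ih =>
    intro A B h
    simp only [List.map_cons] at h
    rw [show ((↑(p.2 :: Δs.map Prod.snd) : Multiset RTy)) = p.2 ::ₘ ↑(Δs.map Prod.snd) from rfl] at h
    have hmem : p.2 ∈ A + B := by rw [← h]; exact Multiset.mem_cons_self _ _
    rcases Multiset.mem_add.mp hmem with hA | hB
    · obtain ⟨A', hAe⟩ := Multiset.exists_cons_of_mem hA
      rw [hAe, Multiset.cons_add] at h
      have h' := (Multiset.cons_inj_right _).mp h
      obtain ⟨Δ₁, Δ₂, hperm, h1, h2⟩ := ih _ _ h'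
      exact ⟨p :: Δ₁, Δ₂, hperm.cons p, by
        simp only [List.map_cons]
        rw [show ((↑(p.2 :: Δ₁.map Prod.snd) : Multiset RTy)) = p.2 ::ₘ ↑(Δ₁.map Prod.snd) from rfl, h1, ← hAe], h2⟩
    · obtain ⟨B', hBe⟩ := Multiset.exists_cons_of_mem hB
      rw [hBe] at h
      have h'' : p.2 ::ₘ (↑(Δs.map Prod.snd) : Multiset RTy) = p.2 ::ₘ (A + B') := by
        rw [h]; rw [add_comm, Multiset.cons_add, add_comm]
      have h' := (Multiset.cons_inj_right _).mp h''
      obtain ⟨Δ₁, Δ₂, hperm, h1, h2⟩ := ih _ _ h'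
      refine ⟨Δ₁, p :: Δ₂, ?_, h1, by
        simp only [List.map_cons]
        rw [show ((↑(p.2 :: Δ₂.map Prod.snd) : Multiset RTy)) = p.2 ::ₘ ↑(Δ₂.map Prod.snd) from rfl, h2, ← hBe]⟩
      exact (hperm.cons p).trans List.perm_middle.symm

lemma split_many {u s : Term} {k : ℕ} :
    ∀ (Δs' : List (Ctx × RTy)),
      (∀ p ∈ Δs', ∀ (Δs : List (Ctx × RTy)), (∀ q ∈ Δs, DerR q.1 s q.2) →
          (↑(Δs.map Prod.snd) : Multiset RTy) = p.1 k →
          DerR (substCtx k p.1 Δs) (subst s k u) p.2) →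
      ∀ (Δs : List (Ctx × RTy)), (∀ q ∈ Δs, DerR q.1 s q.2) →
      (↑(Δs.map Prod.snd) : Multiset RTy) = (Δs'.map (fun p => p.1 k)).sum →
      ∃ Es : List (Ctx × RTy),
        (∀ q ∈ Es, DerR q.1 (subst s k u) q.2) ∧
        Es.map Prod.snd = Δs'.map Prod.snd ∧
        ∀ n, ((Es.map (fun p => p.1 n)).sum : Multiset RTy) =
          (Δs'.map (fun p => if n < k then p.1 n else p.1 (n+1))).sum
            + ((Δs.map (fun p => shiftCtx k p.1 n)).sum) := by
  intro Δs'
  induction Δs' with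
  | nil =>
    intro _ Δs hder h
    simp only [List.map_nil, List.sum_nil, Multiset.coe_eq_zero, List.map_eq_nil_iff] at h
    subst h
    exact ⟨[], by simp, by simp, by simp⟩
  | cons p Δs' ih =>
    intro hIH Δs hder h
    simp only [List.map_cons, List.sum_cons] at h
    obtain ⟨Δ₁, Δ₂, hperm, h1, h2⟩ := split2 Δs _ _ h
    have hsub1 : ∀ q ∈ Δ₁, DerR q.1 s q.2 := fun q hq =>
      hder q (hperm.mem_iff.mpr (List.mem_append.mpr (Or.inl hq)))
    have hsub2 : ∀ q ∈ Δ₂, DerR q.1 s q.2 := fun q hq =>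
      hder q (hperm.mem_iff.mpr (List.mem_append.mpr (Or.inr hq)))
    have hp := hIH p List.mem_cons_self Δ₁ hsub1 h1
    obtain ⟨Es, hE1, hE2, hE3⟩ := ih (fun q hq => hIH q (List.mem_cons_of_mem p hq)) Δ₂ hsub2 h2
    refine ⟨(substCtx k p.1 Δ₁, p.2) :: Es, ?_, by simp [hE2], ?_⟩
    · rintro q hq
      rcases List.mem_cons.mp hq with rfl | hq
      · exact hp
      · exact hE1 q hq
    · intro n
      have hps : ((Δs.map (fun p => shiftCtx k p.1 n)).sum : Multiset RTy)
          = (Δ₁.map (fun p => shiftCtx k p.1 n)).sum + (Δ₂.map (fun p => shiftCtx k p.1 n)).sum := by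
        rw [(hperm.map (fun p => shiftCtx k p.1 n)).sum_eq]
        simp
      simp only [List.map_cons, List.sum_cons, hE3 n, hps, substCtx]
      abel

lemma subst_lemma {Γ : Ctx} {t : Term} {τ : RTy} (hd : DerR Γ t τ) :
    ∀ (s : Term) (k : ℕ) (Δs : List (Ctx × RTy)),
      (∀ q ∈ Δs, DerR q.1 s q.2) →
      (↑(Δs.map Prod.snd) : Multiset RTy) = Γ k →
      DerR (substCtx k Γ Δs) (subst s k t) τ := by
  induction hd with
  | ax n τ =>
    intro s k Δs hder h
    have hΓk : Function.update emptyC n ({τ} : Multiset RTy) k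
        = if k = n then ({τ} : Multiset RTy) else 0 := by
      simp [Function.update_apply, emptyC]
    rcases lt_trichotomy n k with hnk | rfl | hnk
    · -- n < k : variable untouched
      have hk : Function.update emptyC n ({τ} : Multiset RTy) k = 0 := by
        rw [hΓk, if_neg (by omega)]
      rw [hk, Multiset.coe_eq_zero, List.map_eq_nil_iff] at h
      subst h
      rw [show subst s k (Term.var n) = Term.var n by simp [subst, hnk]]
      refine (DerR.ax n τ).congr ?_
      funext m
      simp only [substCtx, List.map_nil, List.sum_nil, add_zero, Function.update_apply, emptyC]
      split_ifs <;> first | rfl | omega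
    · -- n = k : substitute
      have hk : Function.update emptyC n ({τ} : Multiset RTy) n = {τ} := by simp
      rw [hk] at h
      have : Δs.map Prod.snd = [τ] := by
        have := Multiset.coe_eq_coe.mp (h.trans (by rfl : ({τ} : Multiset RTy) = ↑[τ]))
        exact List.perm_singleton.mp this
      obtain ⟨q, Δs', rfl⟩ : ∃ q Δs', Δs = q :: Δs' := by
        cases Δs with
        | nil => simp at this
        | cons q Δs' => exact ⟨q, Δs', rfl⟩
      simp only [List.map_cons, List.cons.injEq, List.map_eq_nil_iff] at this
      obtain ⟨rfl, rfl⟩ := this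
      rw [show subst s n (Term.var n) = (liftAux 0)^[n] s by simp [subst]]
      refine (lift_iter (hder q List.mem_cons_self) n).congr ?_
      funext m
      simp only [substCtx, List.map_cons, List.map_nil, List.sum_cons, List.sum_nil,
        add_zero, Function.update_apply, emptyC, shiftCtx]
      split_ifs <;> first | (rw [zero_add]) | omega | simp_all | rfl
    · -- n > k : variable shifted down
      have hk : Function.update emptyC n ({τ} : Multiset RTy) k = 0 := by
        rw [hΓk, if_neg (by omega)]
      rw [hk, Multiset.coe_eq_zero, List.map_eq_nil_iff] at h
      subst h
      rw [show subst s k (Term.var n) = Term.var (n-1) by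
        simp [subst, Nat.not_lt.mpr (le_of_lt hnk), Nat.ne_of_gt hnk]]
      refine (DerR.ax (n-1) τ).congr ?_
      funext m
      simp only [substCtx, List.map_nil, List.sum_nil, add_zero, Function.update_apply, emptyC]
      split_ifs <;> first | rfl | omega
  | abs L hdt hL ih =>
    intro s k Δs hder h
    rw [show subst s k (Term.lam _) = Term.lam (subst s (k+1) _) from rfl]
    refine (DerR.abs L (ih s (k+1) Δs hder h) ?_).congr ?_
    · rw [hL]
      simp [substCtx, shiftCtx]
    · funext n
      simp only [substCtx, shiftCtx]
      have hent : (Δs.map (fun p => if n + 1 < k + 1 then (0:Multiset RTy) else p.1 (n + 1 - (k+1))))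
          = Δs.map (fun p => if n < k then (0:Multiset RTy) else p.1 (n - k)) := by
        apply List.map_congr_left; intro a _
        simp only [Nat.add_sub_add_right, Nat.add_lt_add_iff_right]
      rw [hent]
      congr 1
      split_ifs <;> first | rfl | omega
  | app Δs' hdt hdu hL iht ihu =>
    intro s k Δs hder h
    obtain ⟨ΔΓ, Δrest, hperm, h1, h2⟩ := split2 Δs _ _ h
    have hsub1 : ∀ q ∈ ΔΓ, DerR q.1 s q.2 := fun q hq =>
      hder q (hperm.mem_iff.mpr (List.mem_append.mpr (Or.inl hq)))
    have hsub2 : ∀ q ∈ Δrest, DerR q.1 s q.2 := fun q hq =>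
      hder q (hperm.mem_iff.mpr (List.mem_append.mpr (Or.inr hq)))
    have ht := iht s k ΔΓ hsub1 h1
    obtain ⟨Es, hE1, hE2, hE3⟩ :=
      split_many Δs' (fun p hp => ihu p hp s k) Δrest hsub2 h2
    rw [show subst s k (Term.app _ _) = Term.app (subst s k _) (subst s k _) from rfl]
    refine (DerR.app Es ht hE1 ?_).congr ?_
    · rw [hE2]; exact hL
    · funext n
      have hps : ((Δs.map (fun p => shiftCtx k p.1 n)).sum : Multiset RTy)
          = (ΔΓ.map (fun p => shiftCtx k p.1 n)).sum + (Δrest.map (fun p => shiftCtx k p.1 n)).sum := by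
        rw [(hperm.map (fun p => shiftCtx k p.1 n)).sum_eq]
        simp
      simp only [substCtx, hE3 n, hps]
      by_cases hn : n < k
      · have hent : Δs'.map (fun p => if n < k then p.1 n else p.1 (n+1))
            = Δs'.map (fun p => p.1 n) := List.map_congr_left fun a _ => by simp [hn]
        rw [hent]
        simp only [if_pos hn]
        abel
      · have hent : Δs'.map (fun p => if n < k then p.1 n else p.1 (n+1))
            = Δs'.map (fun p => p.1 (n+1)) := List.map_congr_left fun a _ => by simp [hn]
        rw [hent]
        simp only [if_neg hn]
        abel

/-- Subject reduction for system R₀. -/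
theorem subject_reduction {Γ : Ctx} {t t' : Term} {τ : RTy}
    (hd : DerR Γ t τ) (hs : Step t t') : DerR Γ t' τ := by
  induction hd generalizing t' with
  | ax n τ => cases hs
  | abs L hdt hL ih =>
    cases hs with
    | lam h => exact DerR.abs L (ih h) hL
  | app Δs hdt hdu hL iht ihu =>
    cases hs with
    | appL h => exact DerR.app Δs (iht h) hdu hL
    | appR h => exact DerR.app Δs hdt (fun p hp => ihu p hp h) hL
    | beta r s =>
      cases hdt with
      | abs L' hr hL' =>
        refine (subst_lemma hr _ 0 Δs hdu (by rw [hL]; exact hL')).congr ?_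
        funext n
        simp [substCtx, shiftCtx]
end

section
/- Subject expansion for the finite multiset intersection type system R₀: if t β-reduces to t' and Γ ⊢ t' : τ is derivable, then Γ ⊢ t : τ is derivable. -/
/- ### Auxiliary machinery -/

def skip (k n : ℕ) : ℕ := if n < k then n else n + 1

lemma skip_ne (k n : ℕ) : skip k n ≠ k := by unfold skip; split <;> omega

lemma skip_succ (k n : ℕ) : skip (k+1) (n+1) = skip k n + 1 := by
  unfold skip; split <;> split <;> omega

lemma skip_zero' (k : ℕ) : skip (k+1) 0 = 0 := by unfold skip; simp

def sumC (Δs : List (Ctx × RTy)) (n : ℕ) : Multiset RTy := (Δs.map (fun p => p.1 n)).sum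

lemma sumC_nil (n : ℕ) : sumC [] n = 0 := rfl
lemma sumC_cons (p : Ctx × RTy) (l : List (Ctx × RTy)) (n : ℕ) :
    sumC (p :: l) n = p.1 n + sumC l n := by simp [sumC]
lemma sumC_append (l₁ l₂ : List (Ctx × RTy)) (n : ℕ) :
    sumC (l₁ ++ l₂) n = sumC l₁ n + sumC l₂ n := by simp [sumC]
lemma sumC_zero (l : List (Ctx × RTy)) (n : ℕ) (h : ∀ p ∈ l, p.1 n = 0) :
    sumC l n = 0 := by
  induction l with
  | nil => rfl
  | cons p l ih =>
    rw [sumC_cons, h p (by simp), ih (fun q hq => h q (by simp [hq]))]; simp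

lemma DerR.congrC {Γ Γ' : Ctx} {t : Term} {τ : RTy} (h : DerR Γ t τ)
    (e : ∀ n, Γ' n = Γ n) : DerR Γ' t τ := by
  rw [show Γ' = Γ from funext e]; exact h

/-- Inversion of lifting. -/
lemma lift_inv : ∀ (t : Term) {Δ : Ctx} {τ : RTy} (c : ℕ),
    DerR Δ (liftAux c t) τ → Δ c = 0 ∧ DerR (fun n => Δ (skip c n)) t τ := by
  intro t
  induction t with
  | var m =>
    intro Δ τ c h
    by_cases hm : m < c
    · simp only [liftAux, if_pos hm] at h
      cases h
      constructor
      · simp [Function.update_apply, emptyC]; omega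
      · refine (DerR.ax m τ).congrC (fun n => ?_)
        simp only [Function.update_apply, emptyC]
        have : skip c n = m ↔ n = m := by unfold skip; split <;> omega
        rw [if_congr this rfl rfl]
    · simp only [liftAux, if_neg hm] at h
      cases h
      constructor
      · simp [Function.update_apply, emptyC]; omega
      · refine (DerR.ax m τ).congrC (fun n => ?_)
        simp only [Function.update_apply, emptyC]
        have : skip c n = m + 1 ↔ n = m := by unfold skip; split <;> omega
        rw [if_congr this rfl rfl]
  | lam t ih =>
    intro Δ τ c h
    simp only [liftAux] at h
    cases h with
    | abs L hd hL =>
      obtain ⟨h0, hder⟩ := ih (c+1) hd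
      refine ⟨h0, ?_⟩
      have := DerR.abs (Γ := fun n => _) L hder (by rw [hL]; simp [skip_zero' c])
      refine this.congrC (fun n => ?_)
      simp [skip_succ]
  | app t u iht ihu =>
    intro Δ τ c h
    simp only [liftAux] at h
    cases h with
    | app Δs hd hargs hL =>
      obtain ⟨h0, hder⟩ := iht c hd
      have hAll : ∀ p ∈ Δs, p.1 c = 0 ∧ DerR (fun n => p.1 (skip c n)) u p.2 :=
        fun p hp => ihu c (hargs p hp)
      constructor
      · simp only [h0, zero_add]
        exact (sumC_zero Δs c (fun p hp => (hAll p hp).1))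
      · have := DerR.app (Δs := Δs.map (fun p => ((fun n => p.1 (skip c n)), p.2)))
          hder (by
            intro q hq
            simp only [List.mem_map] at hq
            obtain ⟨p, hp, rfl⟩ := hq
            exact (hAll p hp).2)
          (by simp only [List.map_map]; exact_mod_cast hL)
        refine this.congrC (fun n => ?_)
        simp only [List.map_map]
        rfl

/-- Combining witnesses over a list of argument derivations. -/
lemma combine (w v : Term) (k : ℕ) :
    ∀ (l : List (Ctx × RTy)),
    (∀ p ∈ l, ∃ (Δs : List (Ctx × RTy)) (Θ : Ctx), DerR Θ v p.2 ∧
        Θ k = ↑(Δs.map Prod.snd) ∧ (∀ q ∈ Δs, DerR q.1 w q.2) ∧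
        ∀ n, p.1 n = Θ (skip k n) + sumC Δs n) →
    ∃ (Θs ΔsJ : List (Ctx × RTy)),
      Θs.map Prod.snd = l.map Prod.snd ∧
      (∀ q ∈ Θs, DerR q.1 v q.2) ∧
      (∀ q ∈ ΔsJ, DerR q.1 w q.2) ∧
      sumC Θs k = ↑(ΔsJ.map Prod.snd) ∧
      ∀ n, sumC l n = sumC Θs (skip k n) + sumC ΔsJ n := by
  intro l
  induction l with
  | nil =>
    intro _
    exact ⟨[], [], rfl, by simp, by simp, by simp [sumC], fun n => by simp [sumC]⟩
  | cons p l ih =>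
    intro h
    obtain ⟨Δs, Θ, hΘ, hΘk, hΔ, hctx⟩ := h p (by simp)
    obtain ⟨Θs, ΔsJ, hmap, hΘs, hΔsJ, hsumk, hsum⟩ := ih (fun q hq => h q (by simp [hq]))
    refine ⟨(Θ, p.2) :: Θs, Δs ++ ΔsJ, by simp [hmap], ?_, ?_, ?_, ?_⟩
    · intro q hq
      rcases List.mem_cons.1 hq with rfl | hq
      · exact hΘ
      · exact hΘs q hq
    · intro q hq
      rcases List.mem_append.1 hq with hq | hq
      · exact hΔ q hq
      · exact hΔsJ q hq
    · rw [sumC_cons]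
      show Θ k + sumC Θs k = _
      rw [hΘk, hsumk]
      simp [List.map_append]
    · intro n
      rw [sumC_cons, hctx n, hsum n, sumC_cons, sumC_append]
      abel

/-- Anti-substitution. -/
lemma antisubst : ∀ (r : Term) {Γ : Ctx} {τ : RTy} (s : Term) (k : ℕ),
    DerR Γ (subst s k r) τ →
    ∃ (Δs : List (Ctx × RTy)) (Θ : Ctx), DerR Θ r τ ∧
      Θ k = ↑(Δs.map Prod.snd) ∧
      (∀ p ∈ Δs, DerR p.1 ((liftAux 0)^[k] s) p.2) ∧
      ∀ n, Γ n = Θ (skip k n) + sumC Δs n := by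
  intro r
  induction r with
  | var m =>
    intro Γ τ s k h
    by_cases h1 : m < k
    · simp only [subst, if_pos h1] at h
      cases h
      refine ⟨[], Function.update emptyC m {τ}, DerR.ax m τ, ?_, by simp, fun n => ?_⟩
      · simp [Function.update_apply, emptyC]; omega
      · rw [sumC_nil, add_zero]
        simp only [Function.update_apply, emptyC]
        have : skip k n = m ↔ n = m := by unfold skip; split <;> omega
        rw [if_congr this rfl rfl]
    · by_cases h2 : m = k
      · subst h2
        simp only [subst, if_neg h1, if_pos rfl] at h
        refine ⟨[(Γ, τ)], Function.update emptyC m {τ}, DerR.ax m τ, ?_,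
          by simpa using h, fun n => ?_⟩
        · simp
        · rw [sumC_cons, sumC_nil, add_zero]
          have : Function.update emptyC m {τ} (skip m n) = 0 := by
            simp [Function.update_apply, emptyC, skip_ne]
          rw [this, zero_add]
      · simp only [subst, if_neg h1, if_neg h2] at h
        cases h
        refine ⟨[], Function.update emptyC m {τ}, DerR.ax m τ, ?_, by simp, fun n => ?_⟩
        · simp [Function.update_apply, emptyC]; omega
        · rw [sumC_nil, add_zero]
          simp only [Function.update_apply, emptyC]
          have : skip k n = m ↔ n = m - 1 := by unfold skip; split <;> omega
          rw [if_congr this rfl rfl]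
  | lam r ih =>
    intro Γ τ s k h
    simp only [subst] at h
    cases h with
    | abs L hd hL =>
      obtain ⟨Δs, Θ, hΘ, hΘk, hΔ, hctx⟩ := ih s (k+1) hd
      have hlift : ∀ p ∈ Δs, p.1 0 = 0 ∧ DerR (fun n => p.1 (skip 0 n)) ((liftAux 0)^[k] s) p.2 := by
        intro p hp
        have := hΔ p hp
        rw [Function.iterate_succ_apply'] at this
        exact lift_inv _ 0 this
      refine ⟨Δs.map (fun p => ((fun n => p.1 (skip 0 n)), p.2)), fun n => Θ (n+1), ?_, ?_, ?_, ?_⟩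
      · refine (DerR.abs L hΘ ?_)
        rw [hL, hctx 0, skip_zero' k, sumC_zero Δs 0 (fun p hp => (hlift p hp).1), add_zero]
      · show Θ (k + 1) = _
        rw [hΘk]
        congr 1
        rw [List.map_map]
        exact (List.map_congr_left (fun p _ => rfl)).symm
      · intro q hq
        simp only [List.mem_map] at hq
        obtain ⟨p, hp, rfl⟩ := hq
        exact (hlift p hp).2
      · intro n
        have e2 : sumC (Δs.map (fun p => ((fun n => p.1 (skip 0 n)), p.2))) n
            = sumC Δs (n+1) := by
          simp [sumC, List.map_map, Function.comp, skip]
          rfl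
        simp only [hctx, skip_succ, e2]
  | app r₁ r₂ ih₁ ih₂ =>
    intro Γ τ s k h
    simp only [subst] at h
    cases h with
    | app Δs₀ hd hargs hL =>
      obtain ⟨Δs₁, Θ₁, hΘ₁, hΘ₁k, hΔ₁, hctx₁⟩ := ih₁ s k hd
      obtain ⟨Θs, ΔsJ, hmap, hΘs, hΔsJ, hsumk, hsum⟩ :=
        combine ((liftAux 0)^[k] s) r₂ k Δs₀ (fun p hp => ih₂ s k (hargs p hp))
      refine ⟨Δs₁ ++ ΔsJ, fun n => Θ₁ n + sumC Θs n, ?_, ?_, ?_, ?_⟩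
      · exact DerR.app Θs hΘ₁ hΘs (by rw [hmap]; exact hL)
      · show Θ₁ k + sumC Θs k = _
        rw [hΘ₁k, hsumk]
        simp [List.map_append]
      · intro q hq
        rcases List.mem_append.1 hq with hq | hq
        · exact hΔ₁ q hq
        · exact hΔsJ q hq
      · intro n
        have h1 := hctx₁ n
        have h2 := hsum n
        simp only [sumC] at h1 h2 ⊢
        rw [h1, h2, List.map_append, List.sum_append]
        abel

/-- Subject expansion for system R₀. -/
theorem subject_expansion {Γ : Ctx} {t t' : Term} {τ : RTy}
    (hs : Step t t') (hd : DerR Γ t' τ) : DerR Γ t τ := by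
  induction hs generalizing Γ τ with
  | beta r s =>
    obtain ⟨Δs, Θ, hΘ, hΘk, hΔ, hctx⟩ := antisubst r s 0 hd
    have habs : DerR (fun n => Θ (n+1)) (.lam r) (.arr (Δs.map Prod.snd) τ) :=
      DerR.abs _ hΘ hΘk.symm
    have := DerR.app Δs habs (by simpa using hΔ) rfl
    refine this.congrC (fun n => ?_)
    rw [hctx n]
    simp [sumC, skip]
  | lam _ ih =>
    cases hd with
    | abs L hd hL => exact DerR.abs L (ih hd) hL
  | appL _ ih =>
    cases hd with
    | app Δs hd hargs hL => exact DerR.app Δs (ih hd) hargs hL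
  | appR _ ih =>
    cases hd with
    | app Δs hd hargs hL => exact DerR.app Δs hd (fun p hp => ih (hargs p hp)) hL
end

section
/- Quantitative subject reduction for system R₀: if Π derives Γ ⊢ t : τ and t head-reduces to t' by firing a redex whose position is typed in Π, then there is a derivation Π' of Γ ⊢ t' : τ whose size (number of rule occurrences) is strictly smaller than that of Π. -/
/-- System R₀ derivations, as data (so that they have a size).
(ax) `x : [τ] ⊢ x : τ`; (abs); (app) with one argument subderivation per
element of the source multiset. -/
inductive DerT : Ctx → Term → RTy → Type
  | ax (n : ℕ) (τ : RTy) :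
      DerT (Function.update emptyC n {τ}) (.var n) τ
  | abs {Γ : Ctx} {t : Term} {τ : RTy} (L : List RTy) :
      DerT Γ t τ → (↑L : Multiset RTy) = Γ 0 →
      DerT (fun n => Γ (n + 1)) (.lam t) (.arr L τ)
  | app {Γ : Ctx} {t u : Term} {τ : RTy} {L : List RTy} (Δs : List (Ctx × RTy)) :
      DerT Γ t (.arr L τ) →
      (∀ p ∈ Δs, DerT p.1 u p.2) →
      (↑(Δs.map Prod.snd) : Multiset RTy) = ↑L →
      DerT (fun n => Γ n + ((Δs.map (fun p => p.1 n)).sum)) (.app t u) τ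

/-- The size of a derivation: its number of rule occurrences. -/
def size : {Γ : Ctx} → {t : Term} → {τ : RTy} → DerT Γ t τ → ℕ
  | _, _, _, .ax _ _ => 1
  | _, _, _, .abs _ d _ => size d + 1
  | _, _, _, .app Δs d ds _ =>
      size d + (Δs.attach.map (fun p => size (ds p.1 p.2))).sum + 1

/-- Head reduction: fire the head redex. -/
inductive HeadStep : Term → Term → Prop
  | beta (r s : Term) : HeadStep (.app (.lam r) s) (subst s 0 r)
  | lam {t t' : Term} : HeadStep t t' → HeadStep (.lam t) (.lam t')
  | app {t t' u : Term} : HeadStep t t' → (∀ r, t ≠ .lam r) →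
      HeadStep (.app t u) (.app t' u)

/-! ### Helpers -/

def recast {Γ Γ' : Ctx} {t t' : Term} {τ : RTy} (hΓ : Γ = Γ') (ht : t = t')
    (d : DerT Γ t τ) : DerT Γ' t' τ := hΓ ▸ ht ▸ d

theorem size_recast {Γ Γ' : Ctx} {t t' : Term} {τ : RTy} (hΓ : Γ = Γ') (ht : t = t')
    (d : DerT Γ t τ) : size (recast hΓ ht d) = size d := by
  subst hΓ; subst ht; rfl

theorem attach_sum_eq {α : Type*} {M : Type*} [AddCommMonoid M] (l : List α)
    (f : ∀ a ∈ l, M) (g : α → M) (h : ∀ a (ha : a ∈ l), f a ha = g a) :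
    (l.attach.map (fun p => f p.1 p.2)).sum = (l.map g).sum := by
  rw [← List.attach_map_val (l := l) (f := g)]
  congr 1
  exact List.map_congr_left (fun p _ => h p.1 p.2)

theorem splitPair {A B : Type*} (f : A → B) (M₁ : Multiset B) :
    ∀ (M₂ : Multiset B) (Es : List A), (↑(Es.map f) : Multiset B) = M₁ + M₂ →
    ∃ E₁ E₂ : List A, Es.Perm (E₁ ++ E₂) ∧ (↑(E₁.map f) : Multiset B) = M₁ ∧
      (↑(E₂.map f) : Multiset B) = M₂ := by
  classical
  induction M₁ using Multiset.induction with
  | empty =>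
      intro M₂ Es h
      exact ⟨[], Es, by simp, by simp, by simpa using h⟩
  | cons b M₁ ih =>
      intro M₂ Es h
      have hb : b ∈ Es.map f := by
        rw [← Multiset.mem_coe, h]
        exact Multiset.mem_add.mpr (Or.inl (Multiset.mem_cons_self _ _))
      obtain ⟨a, ha, hfa⟩ := List.mem_map.mp hb
      have hperm : Es.Perm (a :: Es.erase a) := List.perm_cons_erase ha
      have hmap : (↑(Es.map f) : Multiset B) = f a ::ₘ ↑((Es.erase a).map f) := by
        rw [Multiset.cons_coe, Multiset.coe_eq_coe]
        simpa using hperm.map f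
      have h2 : (↑((Es.erase a).map f) : Multiset B) = M₁ + M₂ := by
        have : (f a ::ₘ ↑((Es.erase a).map f) : Multiset B) = f a ::ₘ (M₁ + M₂) := by
          rw [← hmap, h, hfa, Multiset.cons_add]
        exact (Multiset.cons_inj_right _).mp this
      obtain ⟨E₁, E₂, hp, h1, h2'⟩ := ih M₂ (Es.erase a) h2
      refine ⟨a :: E₁, E₂, ?_, ?_, h2'⟩
      · exact hperm.trans (by simpa using hp.cons a)
      · rw [List.map_cons, ← Multiset.cons_coe, h1, hfa]

theorem joinSplit {A B γ : Type*} (f : A → B) (M : γ → Multiset B) :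
    ∀ (Qs : List γ) (Es : List A), (↑(Es.map f) : Multiset B) = (Qs.map M).sum →
    ∃ Fs : List (List A), Es.Perm Fs.flatten ∧
      List.Forall₂ (fun F q => (↑(F.map f) : Multiset B) = M q) Fs Qs := by
  intro Qs
  induction Qs with
  | nil =>
      intro Es h
      simp only [List.map_nil, List.sum_nil] at h
      have : Es.map f = [] := by simpa using h
      have : Es = [] := List.map_eq_nil_iff.mp this
      exact ⟨[], by simp [this], List.Forall₂.nil⟩
  | cons q Qs ih =>
      intro Es h
      simp only [List.map_cons, List.sum_cons] at h
      obtain ⟨E₀, E₁, hp, h0, h1⟩ := splitPair f (M q) ((Qs.map M).sum) Es h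
      obtain ⟨Fs, hp2, hfa⟩ := ih E₁ h1
      refine ⟨E₀ :: Fs, ?_, List.Forall₂.cons h0 hfa⟩
      simpa using hp.trans (hp2.append_left E₀)

theorem mapChoose {α : Type*} {u' : Term} (Z : List α) (g : α → Ctx × RTy) (bound : α → ℕ)
    (H : ∀ z ∈ Z, ∃ d : DerT (g z).1 u' (g z).2, size d ≤ bound z) :
    ∃ ds : ∀ p ∈ Z.map g, DerT p.1 u' p.2,
      ((Z.map g).attach.map (fun p => size (ds p.1 p.2))).sum ≤ (Z.map bound).sum := by
  classical
  set B : Ctx × RTy → ℕ := fun p => sInf {n | ∃ z ∈ Z, g z = p ∧ bound z = n} with hB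
  have ha : ∀ p ∈ Z.map g, ∃ d : DerT p.1 u' p.2, size d ≤ B p := by
    intro p hp
    obtain ⟨z₀, hz₀, hgz₀⟩ := List.mem_map.mp hp
    have hne : {n | ∃ z ∈ Z, g z = p ∧ bound z = n}.Nonempty :=
      ⟨bound z₀, z₀, hz₀, hgz₀, rfl⟩
    obtain ⟨z₁, hz₁, hgz₁, hbz₁⟩ := Nat.sInf_mem hne
    obtain ⟨d, hd⟩ := H z₁ hz₁
    subst hgz₁
    exact ⟨d, hd.trans (le_of_eq hbz₁)⟩
  choose ds hds using ha
  refine ⟨ds, ?_⟩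
  calc ((Z.map g).attach.map (fun p => size (ds p.1 p.2))).sum
      ≤ ((Z.map g).attach.map (fun p => B p.1)).sum := by
        apply List.sum_le_sum; intro i _; exact hds i.1 i.2
    _ = ((Z.map g).map B).sum := by rw [List.attach_map_val]
    _ = (Z.map (fun z => B (g z))).sum := by rw [List.map_map]; rfl
    _ ≤ (Z.map bound).sum := by
        apply List.sum_le_sum; intro z hz
        exact Nat.sInf_le ⟨z, hz, rfl, rfl⟩

def insCtx (c : ℕ) (Γ : Ctx) : Ctx :=
  fun n => if n < c then Γ n else if n = c then 0 else Γ (n - 1)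

theorem update_apply' (n m : ℕ) (τ : RTy) :
    Function.update emptyC n {τ} m = if m = n then ({τ} : Multiset RTy) else 0 := by
  simp [Function.update_apply, emptyC]

theorem liftD : ∀ {Γ : Ctx} {t : Term} {τ : RTy} (d : DerT Γ t τ) (c : ℕ),
    ∃ d' : DerT (insCtx c Γ) (liftAux c t) τ, size d' ≤ size d := by
  intro Γ t τ d
  induction d with
  | ax n τ =>
      intro c
      by_cases h : n < c
      · have hΓ : (Function.update emptyC n {τ} : Ctx)
            = insCtx c (Function.update emptyC n {τ}) := by
          funext m
          simp only [insCtx, update_apply']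
          split_ifs <;> first | rfl | (exfalso; omega)
        have ht : Term.var n = liftAux c (.var n) := by simp [liftAux, h]
        exact ⟨recast hΓ ht (DerT.ax n τ), by rw [size_recast]⟩
      · have hΓ : (Function.update emptyC (n+1) {τ} : Ctx)
            = insCtx c (Function.update emptyC n {τ}) := by
          funext m
          simp only [insCtx, update_apply']
          split_ifs <;> first | rfl | (exfalso; omega)
        have ht : Term.var (n+1) = liftAux c (.var n) := by simp [liftAux, h]
        exact ⟨recast hΓ ht (DerT.ax (n+1) τ), by rw [size_recast]; simp [size]⟩
  | abs L d₀ h₀ ih =>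
      rename_i Γ₀ t₀ τ₀
      intro c
      obtain ⟨d₁, hd₁⟩ := ih (c+1)
      have hctx0 : (↑L : Multiset RTy) = insCtx (c+1) Γ₀ 0 := by
        simpa [insCtx] using h₀
      have hΓ : (fun n => insCtx (c+1) Γ₀ (n+1)) = insCtx c (fun n => Γ₀ (n+1)) := by
        funext n
        simp only [insCtx]
        split_ifs <;> first | rfl | (exfalso; omega) | (congr 1; omega)
      refine ⟨recast hΓ rfl (DerT.abs L d₁ hctx0), ?_⟩
      refine (size_recast _ _ _).trans_le ?_
      show size d₁ + 1 ≤ size d₀ + 1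
      omega
  | app Δs dfun dargs hL ihfun ihargs =>
      rename_i Γ₀ t₀ u₀ τ₀ L
      intro c
      obtain ⟨df, hdf⟩ := ihfun c
      classical
      set g : Ctx × RTy → Ctx × RTy := fun q => (insCtx c q.1, q.2) with hg
      set bound : Ctx × RTy → ℕ :=
        fun q => if h : q ∈ Δs then size (dargs q h) else 0 with hbound
      have H : ∀ z ∈ Δs, ∃ d : DerT (g z).1 (liftAux c u₀) (g z).2, size d ≤ bound z := by
        intro z hz
        obtain ⟨d, hd⟩ := ihargs z hz c
        exact ⟨d, by rw [hbound]; simpa [hz] using hd⟩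
      obtain ⟨ds', hsum⟩ := mapChoose Δs g bound H
      have hL' : (↑((Δs.map g).map Prod.snd) : Multiset RTy) = ↑L := by
        rw [List.map_map]
        exact hL
      have hΓ : (fun n => insCtx c Γ₀ n + (((Δs.map g).map (fun p => p.1 n)).sum))
          = insCtx c (fun n => Γ₀ n + ((Δs.map (fun p => p.1 n)).sum)) := by
        funext n
        simp only [List.map_map]
        by_cases h1 : n < c
        · rw [List.map_congr_left
            (fun q (_ : q ∈ Δs) => show ((fun p => p.1 n) ∘ g) q = q.1 n by
              simp [hg, insCtx, h1])]
          simp [insCtx, h1]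
        · by_cases h2 : n = c
          · rw [List.map_congr_left
              (fun q (_ : q ∈ Δs) => show ((fun p => p.1 n) ∘ g) q = (0 : Multiset RTy) by
                simp [hg, insCtx, h1, h2])]
            simp [insCtx, h1, h2]
          · rw [List.map_congr_left
              (fun q (_ : q ∈ Δs) => show ((fun p => p.1 n) ∘ g) q = q.1 (n-1) by
                simp [hg, insCtx, h1, h2])]
            simp [insCtx, h1, h2]
      refine ⟨recast hΓ rfl (DerT.app (Δs.map g) df ds' hL'), ?_⟩
      refine (size_recast _ _ _).trans_le ?_
      have hconv : (Δs.attach.map (fun p => size (dargs p.1 p.2))).sum = (Δs.map bound).sum :=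
        attach_sum_eq Δs (fun p hp => size (dargs p hp)) bound
          (fun q hq => by simp [hbound, hq])
      show size df + ((Δs.map g).attach.map (fun p => size (ds' p.1 p.2))).sum + 1
          ≤ size dfun + (Δs.attach.map (fun p => size (dargs p.1 p.2))).sum + 1
      omega

theorem sum_map_add {α M : Type*} [AddCommMonoid M] (l : List α) (f g : α → M) :
    (l.map (fun x => f x + g x)).sum = (l.map f).sum + (l.map g).sum := by
  induction l with
  | nil => simp
  | cons a l ih => simp [ih]; abel

theorem substD {s : Term} : ∀ {Γ : Ctx} {t : Term} {τ : RTy} (d : DerT Γ t τ) (k : ℕ)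
    (Es : List (Ctx × RTy)) (es : ∀ p ∈ Es, DerT p.1 ((liftAux 0)^[k] s) p.2),
    (↑(Es.map Prod.snd) : Multiset RTy) = Γ k →
    ∃ d' : DerT (fun n => (if n < k then Γ n else Γ (n+1)) + ((Es.map (fun p => p.1 n)).sum))
      (subst s k t) τ,
      size d' ≤ size d + (Es.attach.map (fun p => size (es p.1 p.2))).sum := by
  intro Γ t τ d
  induction d with
  | ax n τ =>
      intro k Es es hE
      rcases Nat.lt_trichotomy n k with hnk | hnk | hnk
      · -- n < k : variable below the substituted one
        have hz : Es.map Prod.snd = [] := by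
          have : (↑(Es.map Prod.snd) : Multiset RTy) = 0 := by
            rw [hE, update_apply', if_neg (by omega)]
          simpa using this
        have hEs : Es = [] := List.map_eq_nil_iff.mp hz
        subst hEs
        have ht : Term.var n = subst s k (.var n) := by simp [subst, hnk]
        have hΓ : (Function.update emptyC n {τ} : Ctx)
            = (fun m => (if m < k then Function.update emptyC n {τ} m
                else Function.update emptyC n {τ} (m+1))
              + ((([] : List (Ctx × RTy)).map (fun p => p.1 m)).sum)) := by
          funext m
          simp only [update_apply', List.map_nil, List.sum_nil, add_zero]
          split_ifs <;> first | rfl | (exfalso; omega)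
        exact ⟨recast hΓ ht (DerT.ax n τ), by rw [size_recast]; simp [size]⟩
      · -- n = k : the substituted variable
        subst hnk
        have hone : Es.map Prod.snd = [τ] := by
          have : (↑(Es.map Prod.snd) : Multiset RTy) = ↑[τ] := by
            rw [hE, update_apply', if_pos rfl]; simp
          exact List.perm_singleton.mp (Multiset.coe_eq_coe.mp this)
        obtain ⟨p, hEs, hpτ⟩ : ∃ p, Es = [p] ∧ p.2 = τ := by
          cases Es with
          | nil => simp at hone
          | cons p l =>
              simp only [List.map_cons, List.cons.injEq] at hone
              exact ⟨p, by simp [List.map_eq_nil_iff.mp hone.2], hone.1⟩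
        subst hEs
        subst hpτ
        have hp : p ∈ [p] := List.mem_singleton.mpr rfl
        have ht : (liftAux 0)^[n] s = subst s n (.var n) := by simp [subst]
        have hΓ : p.1 = (fun m => (if m < n then Function.update emptyC n {p.2} m
              else Function.update emptyC n {p.2} (m+1))
            + ((([p] : List (Ctx × RTy)).map (fun q => q.1 m)).sum)) := by
          funext m
          simp only [update_apply', List.map_cons, List.map_nil, List.sum_cons,
            List.sum_nil, add_zero]
          split_ifs <;> first | (exfalso; omega) | simp
        refine ⟨recast hΓ ht (es p hp), ?_⟩
        rw [size_recast]
        simp [size]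
      · -- n > k : variable above the substituted one
        have hz : Es.map Prod.snd = [] := by
          have : (↑(Es.map Prod.snd) : Multiset RTy) = 0 := by
            rw [hE, update_apply', if_neg (by omega)]
          simpa using this
        have hEs : Es = [] := List.map_eq_nil_iff.mp hz
        subst hEs
        have h1 : ¬ n < k := by omega
        have h2 : n ≠ k := by omega
        have ht : Term.var (n-1) = subst s k (.var n) := by
          simp [subst, h1, h2]
        have hΓ : (Function.update emptyC (n-1) {τ} : Ctx)
            = (fun m => (if m < k then Function.update emptyC n {τ} m
                else Function.update emptyC n {τ} (m+1))
              + ((([] : List (Ctx × RTy)).map (fun p => p.1 m)).sum)) := by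
          funext m
          simp only [update_apply', List.map_nil, List.sum_nil, add_zero]
          split_ifs <;> first | rfl | (exfalso; omega)
        exact ⟨recast hΓ ht (DerT.ax (n-1) τ), by rw [size_recast]; simp [size]⟩
  | abs L d₀ h₀ ih =>
      rename_i Γ₀ t₀ τ₀
      intro k Es es hE
      classical
      set esz : Ctx × RTy → ℕ :=
        fun p => if h : p ∈ Es then size (es p h) else 0 with hesz
      set g : Ctx × RTy → Ctx × RTy := fun p => (insCtx 0 p.1, p.2) with hg
      have H : ∀ z ∈ Es, ∃ d : DerT (g z).1 ((liftAux 0)^[k+1] s) (g z).2,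
          size d ≤ esz z := by
        intro z hz
        obtain ⟨d, hd⟩ := liftD (es z hz) 0
        have hterm : liftAux 0 ((liftAux 0)^[k] s) = (liftAux 0)^[k+1] s :=
          (Function.iterate_succ_apply' (liftAux 0) k s).symm
        exact ⟨recast rfl hterm d, by rw [size_recast]; simpa [hesz, hz] using hd⟩
      obtain ⟨es', hsum⟩ := mapChoose Es g esz H
      have hE' : (↑((Es.map g).map Prod.snd) : Multiset RTy) = Γ₀ (k+1) := by
        rw [List.map_map]
        exact hE
      obtain ⟨d₀', hd₀'⟩ := ih (k+1) (Es.map g) es' hE'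
      have habs : (↑L : Multiset RTy)
          = (if 0 < k+1 then Γ₀ 0 else Γ₀ 1) + (((Es.map g).map (fun p => p.1 0)).sum) := by
        rw [if_pos (Nat.succ_pos k), List.map_map]
        rw [List.map_congr_left
          (fun p (_ : p ∈ Es) => show ((fun p => p.1 0) ∘ g) p = (0 : Multiset RTy) by
            simp [hg, insCtx])]
        simpa using h₀
      have hΓ : (fun n => (if n+1 < k+1 then Γ₀ (n+1) else Γ₀ (n+2))
            + (((Es.map g).map (fun p => p.1 (n+1))).sum))
          = (fun n => (if n < k then Γ₀ (n+1) else Γ₀ (n+1+1))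
            + ((Es.map (fun p => p.1 n)).sum)) := by
        funext n
        rw [List.map_map, List.map_congr_left
          (fun p (_ : p ∈ Es) => show ((fun p => p.1 (n+1)) ∘ g) p = p.1 n by
            simp [hg, insCtx])]
        simp only [Nat.add_lt_add_iff_right]
      have ht : Term.lam (subst s (k+1) t₀) = subst s k (.lam t₀) := by simp [subst]
      refine ⟨recast hΓ ht (DerT.abs L d₀' habs), ?_⟩
      rw [size_recast]
      have hconv : (Es.attach.map (fun p => size (es p.1 p.2))).sum = (Es.map esz).sum :=
        attach_sum_eq Es (fun p hp => size (es p hp)) esz (fun q hq => by simp [hesz, hq])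
      show size d₀' + 1 ≤ (size d₀ + 1) + (Es.attach.map (fun p => size (es p.1 p.2))).sum
      omega
  | app Qs dfun dargs hL ihfun ihargs =>
      rename_i Γ₀ t₀ u₀ τ₀ L
      intro k Es es hE
      classical
      set esz : Ctx × RTy → ℕ :=
        fun p => if h : p ∈ Es then size (es p h) else 0 with hesz
      obtain ⟨E₀, E₁, hperm, h₀, h₁⟩ :=
        splitPair Prod.snd (Γ₀ k) ((Qs.map (fun q => q.1 k)).sum) Es hE
      obtain ⟨Fs, hperm2, hfa⟩ := joinSplit Prod.snd (fun q => q.1 k) Qs E₁ h₁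
      obtain ⟨hlen, hzip⟩ := List.forall₂_iff_zip.mp hfa
      -- derivation for the function part
      have memE₀ : ∀ p ∈ E₀, p ∈ Es := fun p hp =>
        hperm.mem_iff.mpr (List.mem_append_left _ hp)
      obtain ⟨df', hdf'⟩ := ihfun k E₀ (fun p hp => es p (memE₀ p hp)) h₀
      -- derivations for the argument parts
      set Z : List (List (Ctx × RTy) × (Ctx × RTy)) := Fs.zip Qs with hZ
      set g : List (Ctx × RTy) × (Ctx × RTy) → Ctx × RTy :=
        fun z => (fun n => (if n < k then z.2.1 n else z.2.1 (n+1))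
          + ((z.1.map (fun p => p.1 n)).sum), z.2.2) with hg
      set bound : List (Ctx × RTy) × (Ctx × RTy) → ℕ :=
        fun z => (if h : z.2 ∈ Qs then size (dargs z.2 h) else 0)
          + (z.1.map esz).sum with hbound
      have memE₁ : ∀ z ∈ Z, ∀ p ∈ z.1, p ∈ Es := by
        intro z hz p hp
        have hzF : z.1 ∈ Fs := (List.of_mem_zip (show (z.1, z.2) ∈ Fs.zip Qs by
          simpa [hZ] using hz)).1
        have : p ∈ Fs.flatten := List.mem_flatten.mpr ⟨z.1, hzF, hp⟩
        exact hperm.mem_iff.mpr (List.mem_append_right _ (hperm2.mem_iff.mpr this))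
      have H : ∀ z ∈ Z, ∃ d : DerT (g z).1 (subst s k u₀) (g z).2, size d ≤ bound z := by
        intro z hz
        have hzQ : z.2 ∈ Qs := (List.of_mem_zip (show (z.1, z.2) ∈ Fs.zip Qs by
          simpa [hZ] using hz)).2
        have hctx : (↑(z.1.map Prod.snd) : Multiset RTy) = z.2.1 k :=
          hzip (show (z.1, z.2) ∈ Fs.zip Qs by simpa [hZ] using hz)
        obtain ⟨d, hd⟩ := ihargs z.2 hzQ k z.1 (fun p hp => es p (memE₁ z hz p hp)) hctx
        refine ⟨d, ?_⟩
        have hconv : (z.1.attach.map (fun p => size (es p.1 (memE₁ z hz p.1 p.2)))).sum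
            = (z.1.map esz).sum :=
          attach_sum_eq z.1 (fun p hp => size (es p (memE₁ z hz p hp))) esz
            (fun q hq => by simp [hesz, memE₁ z hz q hq])
        rw [hbound]
        simp only [dif_pos hzQ]
        omega
      obtain ⟨DS, hsum⟩ := mapChoose Z g bound H
      have hfst : Z.map Prod.fst = Fs := List.map_fst_zip (l₁ := Fs) (l₂ := Qs) (le_of_eq hlen)
      have hsnd : Z.map Prod.snd = Qs := List.map_snd_zip (l₁ := Fs) (l₂ := Qs) (ge_of_eq hlen)
      have hL'' : (↑((Z.map g).map Prod.snd) : Multiset RTy) = ↑L := by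
        rw [List.map_map]
        have : (Z.map (Prod.snd ∘ g)) = Qs.map Prod.snd := by
          show Z.map ((Prod.snd ∘ Prod.snd)) = _
          rw [← List.map_map, hsnd]
        rw [this, hL]
      have ht : Term.app (subst s k t₀) (subst s k u₀) = subst s k (.app t₀ u₀) := by
        simp [subst]
      have hΓ : (fun n => ((if n < k then Γ₀ n else Γ₀ (n+1))
              + ((E₀.map (fun p => p.1 n)).sum))
            + (((Z.map g).map (fun p => p.1 n)).sum))
          = (fun n => (if n < k
              then Γ₀ n + ((Qs.map (fun p => p.1 n)).sum)
              else Γ₀ (n+1) + ((Qs.map (fun p => p.1 (n+1))).sum))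
            + ((Es.map (fun p => p.1 n)).sum)) := by
        funext n
        have hEsum : (Es.map (fun p => p.1 n)).sum
            = (E₀.map (fun p => p.1 n)).sum + (E₁.map (fun p => p.1 n)).sum := by
          rw [(hperm.map (fun p => p.1 n)).sum_eq, List.map_append, List.sum_append]
        have hE₁sum : (E₁.map (fun p => p.1 n)).sum
            = (Z.map (fun z => ((z.1.map (fun p => p.1 n)).sum))).sum := by
          rw [(hperm2.map (fun p => p.1 n)).sum_eq, List.map_flatten, List.sum_flatten,
            ← hfst]
          simp only [List.map_map]
          rfl
        have hsplit : (((Z.map g).map (fun p => p.1 n)).sum)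
            = (Z.map (fun z => (if n < k then z.2.1 n else z.2.1 (n+1)))).sum
              + (Z.map (fun z => ((z.1.map (fun p => p.1 n)).sum))).sum := by
          rw [List.map_map, ← sum_map_add]
          rfl
        have hQsum : (Z.map (fun z => (if n < k then z.2.1 n else z.2.1 (n+1)))).sum
            = (if n < k then (Qs.map (fun p => p.1 n)).sum
               else (Qs.map (fun p => p.1 (n+1))).sum) := by
          by_cases hnk : n < k
          · simp only [if_pos hnk]
            rw [show (fun z : List (Ctx × RTy) × (Ctx × RTy) => z.2.1 n)
              = (fun p : Ctx × RTy => p.1 n) ∘ Prod.snd from rfl, ← List.map_map, hsnd]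
          · simp only [if_neg hnk]
            rw [show (fun z : List (Ctx × RTy) × (Ctx × RTy) => z.2.1 (n+1))
              = (fun p : Ctx × RTy => p.1 (n+1)) ∘ Prod.snd from rfl, ← List.map_map, hsnd]
        rw [hsplit, hQsum, hEsum, hE₁sum]
        by_cases hnk : n < k
        · simp only [if_pos hnk]; abel
        · simp only [if_neg hnk]; abel
      refine ⟨recast hΓ ht (DerT.app (Z.map g) df' DS hL''), ?_⟩
      rw [size_recast]
      -- size bookkeeping
      have hconvE₀ : (E₀.attach.map (fun p => size (es p.1 (memE₀ p.1 p.2)))).sum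
          = (E₀.map esz).sum :=
        attach_sum_eq E₀ (fun p hp => size (es p (memE₀ p hp))) esz
          (fun q hq => by simp [hesz, memE₀ q hq])
      have hconvEs : (Es.attach.map (fun p => size (es p.1 p.2))).sum = (Es.map esz).sum :=
        attach_sum_eq Es (fun p hp => size (es p hp)) esz (fun q hq => by simp [hesz, hq])
      have hconvQs : (Qs.attach.map (fun p => size (dargs p.1 p.2))).sum
          = (Qs.map (fun q => if h : q ∈ Qs then size (dargs q h) else 0)).sum :=
        attach_sum_eq Qs (fun p hp => size (dargs p hp))
          (fun q => if h : q ∈ Qs then size (dargs q h) else 0) (fun q hq => by simp [hq])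
      have hEsum : (Es.map esz).sum = (E₀.map esz).sum + (E₁.map esz).sum := by
        rw [(hperm.map esz).sum_eq, List.map_append, List.sum_append]
      have hE₁sum : (E₁.map esz).sum = (Z.map (fun z => (z.1.map esz).sum)).sum := by
        rw [(hperm2.map esz).sum_eq, List.map_flatten, List.sum_flatten, ← hfst]
        simp only [List.map_map]
        rfl
      have hbsum : (Z.map bound).sum
          = (Z.map (fun z => if h : z.2 ∈ Qs then size (dargs z.2 h) else 0)).sum
            + (Z.map (fun z => (z.1.map esz).sum)).sum := by
        rw [hbound, ← sum_map_add]
      have hQsum : (Z.map (fun z => if h : z.2 ∈ Qs then size (dargs z.2 h) else 0)).sum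
          = (Qs.map (fun q => if h : q ∈ Qs then size (dargs q h) else 0)).sum := by
        rw [show (fun z : List (Ctx × RTy) × (Ctx × RTy) =>
            if h : z.2 ∈ Qs then size (dargs z.2 h) else 0)
          = (fun q : Ctx × RTy => if h : q ∈ Qs then size (dargs q h) else 0) ∘ Prod.snd
          from rfl, ← List.map_map, hsnd]
      show size df' + ((Z.map g).attach.map (fun p => size (DS p.1 p.2))).sum + 1
          ≤ (size dfun + (Qs.attach.map (fun p => size (dargs p.1 p.2))).sum + 1)
            + (Es.attach.map (fun p => size (es p.1 p.2))).sum
      omega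

/-- Quantitative subject reduction: firing the head redex of a term typed by a
derivation `Π` yields a derivation of the reduct, with the same context and
type, of strictly smaller size. -/
theorem quantitative_subject_reduction {Γ : Ctx} {t t' : Term} {τ : RTy}
    (P : DerT Γ t τ) (hs : HeadStep t t') :
    ∃ P' : DerT Γ t' τ, size P' < size P := by
  induction hs generalizing Γ τ with
  | beta r s =>
      cases P with
      | app Δs dfun ds hL =>
        cases dfun with
        | abs L' d₁ h₁ =>
          rename_i Γ₁
          obtain ⟨d', hd'⟩ := substD d₁ 0 Δs ds (hL.trans h₁)
          have hΓ : (fun n => (if n < 0 then Γ₁ n else Γ₁ (n+1))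
                + ((Δs.map (fun p => p.1 n)).sum))
              = (fun n => Γ₁ (n+1) + ((Δs.map (fun p => p.1 n)).sum)) := by
            funext n; simp
          refine ⟨recast hΓ rfl d', ?_⟩
          rw [size_recast]
          show size d' < (size d₁ + 1) + (Δs.attach.map (fun p => size (ds p.1 p.2))).sum + 1
          exact Nat.lt_succ_of_le (le_trans hd' (Nat.add_le_add_right (Nat.le_succ _) _))
  | lam hstep ih =>
      cases P with
      | abs L d h =>
          obtain ⟨d', hd'⟩ := ih d
          exact ⟨DerT.abs L d' h, by show size d' + 1 < size d + 1; omega⟩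
  | app hstep hnl ih =>
      cases P with
      | app Δs dfun ds hL =>
          obtain ⟨d', hd'⟩ := ih dfun
          refine ⟨DerT.app Δs d' ds hL, ?_⟩
          show size d' + _ + 1 < size dfun + _ + 1
          omega
end

section
/- Every lambda term typable in system R₀ is head normalizing. -/
/-- A head normal form: a term with no head redex
(i.e. of the form `λx₁…xₙ. y u₁ … uₘ`). -/
def HeadNormal (t : Term) : Prop := ∀ t', ¬ HeadStep t t'


/-! ### Auxiliary development: sized derivations -/

abbrev P := ℕ × Ctx × RTy

def tys (l : List P) : Multiset RTy := ↑(l.map fun p => p.2.2)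
def ctxs (l : List P) (m : ℕ) : Multiset RTy := (l.map fun p => p.2.1 m).sum
def szs (l : List P) : ℕ := (l.map fun p => p.1).sum

@[simp] lemma tys_nil : tys [] = 0 := rfl
@[simp] lemma ctxs_nil (m : ℕ) : ctxs [] m = 0 := rfl
@[simp] lemma szs_nil : szs [] = 0 := rfl
@[simp] lemma tys_cons (p : P) (l : List P) : tys (p :: l) = p.2.2 ::ₘ tys l := rfl
@[simp] lemma ctxs_cons (p : P) (l : List P) (m : ℕ) :
    ctxs (p :: l) m = p.2.1 m + ctxs l m := rfl
@[simp] lemma szs_cons (p : P) (l : List P) : szs (p :: l) = p.1 + szs l := rfl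

inductive DerN : ℕ → Ctx → Term → RTy → Prop
  | ax (n : ℕ) (τ : RTy) :
      DerN 1 (Function.update emptyC n {τ}) (.var n) τ
  | abs {k : ℕ} {Γ : Ctx} {t : Term} {τ : RTy} (L : List RTy) :
      DerN k Γ t τ → (↑L : Multiset RTy) = Γ 0 →
      DerN (k + 1) (fun n => Γ (n + 1)) (.lam t) (.arr L τ)
  | app {k : ℕ} {Γ : Ctx} {t u : Term} {τ : RTy} {L : List RTy} (Δs : List P) :
      DerN k Γ t (.arr L τ) →
      (∀ p ∈ Δs, DerN p.1 p.2.1 u p.2.2) →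
      tys Δs = ↑L →
      DerN (k + 1 + szs Δs) (fun m => Γ m + ctxs Δs m) (.app t u) τ

lemma derN_congr {n : ℕ} {Γ Γ' : Ctx} {t : Term} {τ : RTy}
    (h : DerN n Γ t τ) (hΓ : ∀ m, Γ m = Γ' m) : DerN n Γ' t τ := by
  have : Γ = Γ' := funext hΓ
  exact this ▸ h

/-- Splitting a list of premises according to a multiset split of its types. -/
lemma tys_split : ∀ (l : List P) (A B : Multiset RTy), tys l = A + B →
    ∃ l₁ l₂ : List P, (↑l₁ + ↑l₂ : Multiset P) = ↑l ∧ tys l₁ = A ∧ tys l₂ = B := by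
  intro l
  induction l with
  | nil =>
    intro A B h
    simp only [tys_nil] at h
    obtain ⟨hA, hB⟩ := (add_eq_zero_iff_of_nonneg (by simp) (by simp)).1 h.symm
    exact ⟨[], [], by simp, by simp [hA], by simp [hB]⟩
  | cons x l ih =>
    intro A B h
    have hx : x.2.2 ∈ A + B := by rw [← h]; simp
    rcases Multiset.mem_add.1 hx with hA | hB
    · obtain ⟨A', rfl⟩ := Multiset.exists_cons_of_mem hA
      have h' : tys l = A' + B := by
        have h2 : x.2.2 ::ₘ tys l = x.2.2 ::ₘ (A' + B) := by
          simpa [Multiset.cons_add] using h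
        exact (Multiset.cons_inj_right _).1 h2
      obtain ⟨l₁, l₂, hl, h1, h2⟩ := ih A' B h'
      refine ⟨x :: l₁, l₂, ?_, by simp [h1], h2⟩
      rw [← Multiset.cons_coe, ← Multiset.cons_coe, Multiset.cons_add, hl]
    · obtain ⟨B', rfl⟩ := Multiset.exists_cons_of_mem hB
      have h' : tys l = A + B' := by
        have h2 : x.2.2 ::ₘ tys l = x.2.2 ::ₘ (A + B') := by
          simpa [Multiset.add_cons] using h
        exact (Multiset.cons_inj_right _).1 h2
      obtain ⟨l₁, l₂, hl, h1, h2⟩ := ih A B' h'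
      refine ⟨l₁, x :: l₂, ?_, h1, by simp [h2]⟩
      rw [← Multiset.cons_coe, ← Multiset.cons_coe, Multiset.add_cons, hl]

lemma split_mem {l₁ l₂ l : List P} (h : (↑l₁ + ↑l₂ : Multiset P) = ↑l) :
    (∀ p ∈ l₁, p ∈ l) ∧ (∀ p ∈ l₂, p ∈ l) := by
  constructor <;> intro p hp <;>
  · have : p ∈ (↑l : Multiset P) := by
      rw [← h]; simp [hp]
    simpa using this

lemma split_sum {α : Type*} [AddCommMonoid α] {l₁ l₂ l : List P}
    (h : (↑l₁ + ↑l₂ : Multiset P) = ↑l) (g : P → α) :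
    (l.map g).sum = (l₁.map g).sum + (l₂.map g).sum := by
  have := congrArg (fun s => (Multiset.map g s).sum) h
  simpa using this.symm

lemma split_len {l₁ l₂ l : List P} (h : (↑l₁ + ↑l₂ : Multiset P) = ↑l) :
    l.length = l₁.length + l₂.length := by
  have := congrArg Multiset.card h
  simpa using this.symm

lemma split_szs {l₁ l₂ l : List P} (h : (↑l₁ + ↑l₂ : Multiset P) = ↑l) :
    szs l = szs l₁ + szs l₂ := split_sum h _

lemma split_ctxs {l₁ l₂ l : List P} (h : (↑l₁ + ↑l₂ : Multiset P) = ↑l) (m : ℕ) :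
    ctxs l m = ctxs l₁ m + ctxs l₂ m := split_sum h _

lemma split_tys {l₁ l₂ l : List P} (h : (↑l₁ + ↑l₂ : Multiset P) = ↑l) :
    tys l = tys l₁ + tys l₂ := by
  have := congrArg (fun s => Multiset.map (fun p : P => p.2.2) s) h
  simpa [tys] using this.symm

/-- Choose sizes for a list of premises. -/
lemma choose_sizes (u : Term) : ∀ (l : List (Ctx × RTy)),
    (∀ p ∈ l, ∃ n, DerN n p.1 u p.2) →
    ∃ l' : List P, l'.map (fun p => p.2) = l ∧ ∀ p ∈ l', DerN p.1 p.2.1 u p.2.2 := by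
  intro l
  induction l with
  | nil => exact fun _ => ⟨[], rfl, by simp⟩
  | cons x l ih =>
    intro h
    obtain ⟨n, hn⟩ := h x (by simp)
    obtain ⟨l', hl', hder⟩ := ih (fun p hp => h p (by simp [hp]))
    refine ⟨(n, x.1, x.2) :: l', by simp [hl'], ?_⟩
    intro p hp
    rcases List.mem_cons.1 hp with rfl | hp
    · exact hn
    · exact hder p hp

lemma derR_to_derN {Γ : Ctx} {t : Term} {τ : RTy} (h : DerR Γ t τ) :
    ∃ n, DerN n Γ t τ := by
  induction h with
  | ax n τ => exact ⟨1, DerN.ax n τ⟩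
  | abs L _ hL ih =>
    obtain ⟨n, hn⟩ := ih
    exact ⟨n + 1, DerN.abs L hn hL⟩
  | app Δs _ _ hL iht ihu =>
    obtain ⟨n, hn⟩ := iht
    obtain ⟨l', hl', hder⟩ := choose_sizes _ Δs ihu
    refine ⟨n + 1 + szs l', ?_⟩
    have : tys l' = ↑(Δs.map Prod.snd) := by
      rw [← hl']; simp [tys, List.map_map]; rfl
    have happ := DerN.app l' hn hder (this.trans hL)
    refine derN_congr happ fun m => ?_
    congr 1
    rw [← hl']
    simp [ctxs, List.map_map]
    rfl

lemma updE (j m : ℕ) (τ : RTy) :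
    Function.update emptyC j {τ} m = if m = j then ({τ} : Multiset RTy) else 0 := by
  simp [Function.update_apply, emptyC]

/-- Insert an empty slot at position `c` of a context. -/
def liftCtx (c : ℕ) (Γ : Ctx) : Ctx :=
  fun m => if m < c then Γ m else if m = c then 0 else Γ (m - 1)

lemma derN_lift {n : ℕ} {Γ : Ctx} {t : Term} {τ : RTy} (h : DerN n Γ t τ) :
    ∀ c, DerN n (liftCtx c Γ) (liftAux c t) τ := by
  induction h with
  | ax j τ =>
    intro c
    by_cases hj : j < c
    · have he : liftAux c (.var j) = .var j := by simp [liftAux, hj]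
      rw [he]
      refine derN_congr (DerN.ax j τ) fun m => ?_
      simp only [updE, liftCtx]
      split_ifs <;> first | rfl | (exfalso; omega)
    · have he : liftAux c (.var j) = .var (j + 1) := by simp [liftAux, hj]
      rw [he]
      refine derN_congr (DerN.ax (j + 1) τ) fun m => ?_
      simp only [updE, liftCtx]
      split_ifs <;> first | rfl | (exfalso; omega)
  | abs L hd hL ih =>
    intro c
    rename_i k Γ' t' τ'
    have h0 : (↑L : Multiset RTy) = liftCtx (c + 1) Γ' 0 := by
      simp [liftCtx]; exact hL
    have habs := DerN.abs L (ih (c + 1)) h0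
    refine derN_congr habs fun m => ?_
    simp only [liftCtx]
    have h5 : ¬ m < c → m ≠ c → m + 1 - 1 = m - 1 + 1 := by omega
    split_ifs with a b c' <;> first | rfl | (exfalso; omega) | (rw [h5] <;> omega)
  | app Δs hd hprem hL iht ihu =>
    intro c
    rename_i k Γ' t' u' τ' L'
    set Δs' : List P := Δs.map (fun p => (p.1, liftCtx c p.2.1, p.2.2)) with hΔs'
    have htys : tys Δs' = ↑L' := by
      rw [← hL]; simp [tys, hΔs', List.map_map]; rfl
    have hprem' : ∀ p ∈ Δs', DerN p.1 p.2.1 (liftAux c u') p.2.2 := by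
      intro p hp
      simp only [hΔs', List.mem_map] at hp
      obtain ⟨q, hq, rfl⟩ := hp
      exact ihu q hq c
    have happ := DerN.app Δs' (iht c) hprem' htys
    have hsz : szs Δs' = szs Δs := by simp [szs, hΔs', List.map_map]; rfl
    rw [hsz] at happ
    refine derN_congr happ fun m => ?_
    have hctxs : ctxs Δs' m = liftCtx c (ctxs Δs) m := by
      simp only [ctxs, hΔs', List.map_map, liftCtx]
      split_ifs with a b
      · exact congrArg List.sum (List.map_congr_left fun q _ => by simp [liftCtx, a])
      · apply List.sum_eq_zero
        intro x hx
        simp only [List.mem_map] at hx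
        obtain ⟨q, hq, rfl⟩ := hx
        simp [liftCtx, a, b]
      · exact congrArg List.sum (List.map_congr_left fun q _ => by simp [liftCtx, a, b])
    rw [hctxs]
    simp only [liftCtx]
    split_ifs <;> simp

lemma derN_liftIter {n : ℕ} {Δ : Ctx} {s : Term} {σ : RTy} (h : DerN n Δ s σ) :
    ∀ k, DerN n (fun m => if m < k then 0 else Δ (m - k)) ((liftAux 0)^[k] s) σ := by
  intro k
  induction k with
  | zero => simpa using h
  | succ k ih =>
    rw [Function.iterate_succ_apply']
    refine derN_congr (derN_lift ih 0) fun m => ?_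
    simp only [liftCtx]
    split_ifs <;> first | rfl | (exfalso; omega) | (congr 1; omega)

lemma derN_subst (s : Term) :
    ∀ {n : ℕ} {Γ : Ctx} {r : Term} {τ : RTy}, DerN n Γ r τ →
    ∀ (k : ℕ) (Δs : List P), (∀ p ∈ Δs, DerN p.1 p.2.1 s p.2.2) → tys Δs = Γ k →
    ∃ m, m + Δs.length ≤ n + szs Δs ∧
      DerN m (fun j => (if j < k then Γ j else Γ (j + 1)) +
        (if j < k then 0 else ctxs Δs (j - k))) (subst s k r) τ := by
  intro n Γ r τ h
  induction h with
  | ax jv τv =>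
    intro k Δs hΔ htys
    rcases lt_trichotomy jv k with hj | rfl | hj
    · have h0 : tys Δs = 0 := by
        rw [htys, updE]
        have : k ≠ jv := by omega
        simp [this]
      have hnil : Δs = [] := by
        cases Δs with
        | nil => rfl
        | cons a l => simp at h0
      subst hnil
      have he : subst s k (.var jv) = .var jv := by simp [subst, hj]
      rw [he]
      refine ⟨1, by simp, derN_congr (DerN.ax jv τv) fun m => ?_⟩
      simp only [updE, ctxs_nil]
      split_ifs <;> first | rfl | (exfalso; omega) | simp
    · have hsing : Δs.map (fun p => p.2.2) = [τv] := by
        have h1 : tys Δs = ({τv} : Multiset RTy) := by rw [htys, updE]; simp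
        exact Multiset.coe_eq_singleton.1 h1
      obtain ⟨p, rfl⟩ : ∃ p, Δs = [p] := by
        cases Δs with
        | nil => simp at hsing
        | cons a l =>
          cases l with
          | nil => exact ⟨a, rfl⟩
          | cons b l => simp at hsing
      have hpt : p.2.2 = τv := by simpa using hsing
      have he : subst s jv (.var jv) = (liftAux 0)^[jv] s := by simp [subst]
      rw [he]
      have hder := hΔ p (by simp)
      rw [hpt] at hder
      have hl := derN_liftIter hder jv
      refine ⟨p.1, by simp [szs], derN_congr hl fun m => ?_⟩
      simp only [updE, ctxs_cons, ctxs_nil, add_zero]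
      split_ifs <;> first | rfl | (exfalso; omega) | simp
    · have h0 : tys Δs = 0 := by
        rw [htys, updE]
        have : k ≠ jv := by omega
        simp [this]
      have hnil : Δs = [] := by
        cases Δs with
        | nil => rfl
        | cons a l => simp at h0
      subst hnil
      have h1 : ¬ jv < k := by omega
      have h2 : jv ≠ k := by omega
      have he : subst s k (.var jv) = .var (jv - 1) := by simp [subst, h1, h2]
      rw [he]
      refine ⟨1, by simp, derN_congr (DerN.ax (jv - 1) τv) fun m => ?_⟩
      simp only [updE, ctxs_nil]
      split_ifs <;> first | rfl | (exfalso; omega) | simp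
  | abs L hd hL ih =>
    rename_i k₀ Γ' t' τ'
    intro k Δs hΔ htys
    obtain ⟨m, hm, hder⟩ := ih (k + 1) Δs hΔ htys
    have habs := DerN.abs L hder (by simp [Nat.succ_pos]; exact hL)
    refine ⟨m + 1, by omega, derN_congr habs fun j => ?_⟩
    have hc : (j + 1 < k + 1) = (j < k) := by rw [eq_iff_iff]; omega
    have e : j + 1 - (k + 1) = j - k := by omega
    simp only [hc, e]
  | app Es hdt hprem hL iht ihu =>
    rename_i k₀ Γ₁ t' u' τ' L₁
    intro k Δs hΔ htys
    obtain ⟨Δt, R, hsplit, htT, htR⟩ := tys_split Δs (Γ₁ k) (ctxs Es k) htys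
    have inner : ∀ (Es' : List P), (∀ e ∈ Es', DerN e.1 e.2.1 u' e.2.2) →
        (∀ e ∈ Es', ∀ (k' : ℕ) (Δs' : List P), (∀ p ∈ Δs', DerN p.1 p.2.1 s p.2.2) →
          tys Δs' = e.2.1 k' →
          ∃ m, m + Δs'.length ≤ e.1 + szs Δs' ∧
            DerN m (fun j => (if j < k' then e.2.1 j else e.2.1 (j + 1)) +
              (if j < k' then 0 else ctxs Δs' (j - k'))) (subst s k' u') e.2.2) →
        ∀ (R' : List P), (∀ p ∈ R', DerN p.1 p.2.1 s p.2.2) → tys R' = ctxs Es' k →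
        ∃ Es'' : List P, (∀ e ∈ Es'', DerN e.1 e.2.1 (subst s k u') e.2.2) ∧
          tys Es'' = tys Es' ∧
          (∀ j, ctxs Es'' j = (if j < k then ctxs Es' j else ctxs Es' (j + 1)) +
            (if j < k then 0 else ctxs R' (j - k))) ∧
          szs Es'' + R'.length ≤ szs Es' + szs R' := by
      intro Es'
      induction Es' with
      | nil =>
        intro _ _ R' hR' htR'
        have hnil : R' = [] := by
          cases R' with
          | nil => rfl
          | cons a l => simp [ctxs_nil] at htR'
        subst hnil
        exact ⟨[], by simp, by simp, by simp, by simp⟩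
      | cons e Es₀ ih0 =>
        intro hders hIH R' hR' htR'
        obtain ⟨R₁, R₂, hRsplit, hR1, hR2⟩ :=
          tys_split R' (e.2.1 k) (ctxs Es₀ k) (by simpa using htR')
        obtain ⟨me, hme, hde⟩ := hIH e (by simp) k R₁
          (fun p hp => hR' p ((split_mem hRsplit).1 p hp)) hR1
        obtain ⟨Es₀', hd0, ht0, hc0, hs0⟩ := ih0 (fun x hx => hders x (by simp [hx]))
          (fun x hx => hIH x (by simp [hx])) R₂
          (fun p hp => hR' p ((split_mem hRsplit).2 p hp)) hR2
        refine ⟨(me, (fun j => (if j < k then e.2.1 j else e.2.1 (j + 1)) +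
            (if j < k then 0 else ctxs R₁ (j - k))), e.2.2) :: Es₀', ?_, ?_, ?_, ?_⟩
        · intro x hx
          rcases List.mem_cons.1 hx with rfl | hx
          · exact hde
          · exact hd0 x hx
        · simp [ht0]
        · intro j
          have hcR : ctxs R' (j - k) = ctxs R₁ (j - k) + ctxs R₂ (j - k) := split_ctxs hRsplit _
          simp only [ctxs_cons, hc0, hcR]
          split_ifs with a <;> abel
        · have h1 := split_szs hRsplit
          have h2 := split_len hRsplit
          simp only [szs_cons]
          omega
    obtain ⟨Es'', hd'', ht'', hc'', hs''⟩ := inner Es hprem ihu R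
      (fun p hp => hΔ p ((split_mem hsplit).2 p hp)) htR
    obtain ⟨mt, hmt, hdt'⟩ := iht k Δt (fun p hp => hΔ p ((split_mem hsplit).1 p hp)) htT
    have happ := DerN.app Es'' hdt' hd'' (ht''.trans hL)
    refine ⟨mt + 1 + szs Es'', ?_, ?_⟩
    · have h1 := split_len hsplit
      have h2 := split_szs hsplit
      omega
    · refine derN_congr happ fun j => ?_
      rw [hc'' j]
      have hcc : ctxs Δs (j - k) = ctxs Δt (j - k) + ctxs R (j - k) := split_ctxs hsplit _
      simp only [hcc]
      split_ifs with a <;> abel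

/-- Weighted subject reduction for head steps. -/
lemma derN_head : ∀ {t t' : Term}, HeadStep t t' →
    ∀ {n : ℕ} {Γ : Ctx} {τ : RTy}, DerN n Γ t τ → ∃ m < n, DerN m Γ t' τ := by
  intro t t' hs
  induction hs with
  | beta r s =>
    intro n Γ τ hd
    cases hd with
    | app Δs hlam hprem hL =>
      rename_i k Γ₁ L
      cases hlam with
      | abs L' hr hL' =>
        rename_i k₂ Γ₂
        obtain ⟨m, hm, hd'⟩ := derN_subst s hr 0 Δs hprem (hL.trans hL')
        refine ⟨m, by omega, derN_congr hd' fun j => ?_⟩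
        simp
  | lam hstep ih =>
    intro n Γ τ hd
    cases hd with
    | abs L hb hL =>
      obtain ⟨m, hm, hd'⟩ := ih hb
      exact ⟨m + 1, by omega, DerN.abs L hd' hL⟩
  | app hstep hne ih =>
    intro n Γ τ hd
    cases hd with
    | app Δs hdt hprem hL =>
      obtain ⟨m, hm, hd'⟩ := ih hdt
      exact ⟨m + 1 + szs Δs, by omega, DerN.app Δs hd' hprem hL⟩

/-- Every term is head normal or has a head step. -/
lemma progress : ∀ t : Term, HeadNormal t ∨ ∃ t', HeadStep t t' := by
  intro t
  induction t with
  | var n => left; intro t' h; cases h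
  | lam t ih =>
    rcases ih with hn | ⟨t', ht⟩
    · left
      intro u h
      cases h with
      | lam h' => exact hn _ h'
    · right; exact ⟨_, HeadStep.lam ht⟩
  | app t u iht _ =>
    rcases t with nv | r | ⟨a, b⟩
    · left
      intro w h
      cases h with
      | app h' hne => cases h'
    · right; exact ⟨_, HeadStep.beta r u⟩
    · rcases iht with hn | ⟨t', ht⟩
      · left
        intro w h
        cases h with
        | app h' hne => exact hn _ h'
      · right
        exact ⟨_, HeadStep.app ht (fun r h => Term.noConfusion h)⟩

lemma derN_hn : ∀ n : ℕ, ∀ {Γ : Ctx} {t : Term} {τ : RTy}, DerN n Γ t τ →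
    ∃ t', Relation.ReflTransGen HeadStep t t' ∧ HeadNormal t' := by
  intro n
  induction n using Nat.strong_induction_on with
  | _ n ih =>
    intro Γ t τ hd
    rcases progress t with hn | ⟨t'', hstep⟩
    · exact ⟨t, .refl, hn⟩
    · obtain ⟨m, hm, hd'⟩ := derN_head hstep hd
      obtain ⟨t', hsteps, hn⟩ := ih m hm hd'
      exact ⟨t', .head hstep hsteps, hn⟩

/-- Every term typable in system R₀ is head normalizing: some sequence of head
reductions reaches a head normal form. -/
theorem typable_head_normalizing {Γ : Ctx} {t : Term} {τ : RTy}
    (hd : DerR Γ t τ) :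
    ∃ t', Relation.ReflTransGen HeadStep t t' ∧ HeadNormal t' := by
  obtain ⟨n, hn⟩ := derR_to_derN hd
  exact derN_hn n hn
end
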